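/- For any group G and any n ≥ 0, the quotient group G / G_r^{(n+1)} is poly-torsion-free-abelian (PTFA), i.e., it admits a finite normal series whose successive quotients are torsion-free abelian. -/

import Mathlib

/-- The rational derived series of a group `G`:
`G_r^(0) = G` and `G_r^(n+1)` is generated by the commutator subgroup of `G_r^(n)`
together with all elements of `G_r^(n)` having a nonzero integer power in that
commutator subgroup. -/
def ratDerivedSeries (G : Type*) [Group G] : ℕ → Subgroup G
  | 0 => ⊤
  | n + 1 =>
    let H := ratDerivedSeries G n
    Subgroup.closure ((⁅H, H⁆ : Subgroup G) ∪
      {g : G | g ∈ H ∧ ∃ k : ℤ, k ≠ 0 ∧ g ^ k ∈ (⁅H, H⁆ : Subgroup G)})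


/-- `Γ` admits a normal series `⊥ = Γ_0 ◁ Γ_1 ◁ ... ◁ Γ_m = Γ` of length `m` in which each
successive quotient `Γ_{k+1}/Γ_k` is torsion-free abelian (the abelianness is encoded by
commutators landing in the previous term, torsion-freeness by the root condition). -/
def IsPTFAOfLength (Γ : Type*) [Group Γ] (m : ℕ) : Prop :=
  ∃ s : ℕ → Subgroup Γ, s 0 = ⊥ ∧ s m = ⊤ ∧
    ∀ k < m, s k ≤ s (k + 1) ∧
      (∀ x ∈ s (k + 1), ∀ y ∈ s (k + 1), x * y * x⁻¹ * y⁻¹ ∈ s k) ∧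
      (∀ x ∈ s (k + 1), ∀ n : ℤ, n ≠ 0 → x ^ n ∈ s k → x ∈ s k)

/-- A group is poly-torsion-free-abelian (PTFA) if it admits a finite normal series with
torsion-free abelian successive quotients. -/
def IsPTFA (Γ : Type*) [Group Γ] : Prop := ∃ m : ℕ, IsPTFAOfLength Γ m

/-! Each term of the rational derived series is the preimage, in the previous term `H`, of the
torsion of `Hᵃᵇ`, so `G_r^(i) / G_r^(i+1)` is torsion-free abelian. Since the series is
descending, these properties pass to the images in `G / G_r^(n+1)`, where the kernel
`G_r^(n+1)` lies below every `G_r^(i+1)` with `i ≤ n`; read from the bottom up, the images form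
a PTFA series ending at the trivial group. -/

section RatCommutator

variable {G : Type*} [Group G]

/-- Taken as the preimage of the torsion of `Hᵃᵇ`, so that closure under products comes for free. -/
def ratCommutator (H : Subgroup G) : Subgroup G :=
  ((CommGroup.torsion (Abelianization H)).comap Abelianization.of).map H.subtype

lemma mem_ratCommutator {H : Subgroup G} {g : G} :
    g ∈ ratCommutator H ↔ g ∈ H ∧ ∃ k : ℤ, k ≠ 0 ∧ g ^ k ∈ ⁅H, H⁆ := by
  have mem_commutator (x : H) : x ∈ commutator H ↔ (x : G) ∈ ⁅H, H⁆ := by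
    rw [← H.map_subtype_commutator]
    exact (Subgroup.mem_map_iff_mem H.subtype_injective).symm
  constructor
  · rintro ⟨x, hx, rfl⟩
    obtain ⟨k, hk, hxk⟩ := isOfFinOrder_iff_zpow_eq_one.mp hx
    rw [← map_zpow, ← MonoidHom.mem_ker, Abelianization.ker_of, mem_commutator] at hxk
    exact ⟨x.2, k, hk, hxk⟩
  · rintro ⟨hg, k, hk, hgk⟩
    refine ⟨⟨g, hg⟩, isOfFinOrder_iff_zpow_eq_one.mpr ⟨k, hk, ?_⟩, rfl⟩
    rw [← map_zpow, ← MonoidHom.mem_ker, Abelianization.ker_of, mem_commutator]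
    exact hgk

lemma ratCommutator_le (H : Subgroup G) : ratCommutator H ≤ H :=
  fun _ hg => (mem_ratCommutator.mp hg).1

lemma commutator_le_ratCommutator (H : Subgroup G) : ⁅H, H⁆ ≤ ratCommutator H :=
  fun g hg => mem_ratCommutator.mpr ⟨H.commutator_le_self hg, 1, one_ne_zero, by simpa using hg⟩

lemma mem_ratCommutator_of_zpow_mem {H : Subgroup G} {g : G} (hg : g ∈ H) {n : ℤ} (hn : n ≠ 0)
    (hgn : g ^ n ∈ ratCommutator H) : g ∈ ratCommutator H := by
  obtain ⟨-, k, hk, hgnk⟩ := mem_ratCommutator.mp hgn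
  exact mem_ratCommutator.mpr ⟨hg, n * k, mul_ne_zero hn hk, by rwa [zpow_mul]⟩

end RatCommutator

lemma ratDerivedSeries_succ (G : Type*) [Group G] (n : ℕ) :
    ratDerivedSeries G (n + 1) = ratCommutator (ratDerivedSeries G n) := by
  have hset : {g : G | g ∈ ratDerivedSeries G n ∧ ∃ k : ℤ, k ≠ 0 ∧
      g ^ k ∈ ⁅ratDerivedSeries G n, ratDerivedSeries G n⁆} = ratCommutator (ratDerivedSeries G n) :=
    Set.ext fun _ => mem_ratCommutator.symm
  rw [ratDerivedSeries, hset, Set.union_eq_right.mpr (commutator_le_ratCommutator _),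
    Subgroup.closure_eq]

lemma ratDerivedSeries_antitone (G : Type*) [Group G] : Antitone (ratDerivedSeries G) :=
  antitone_nat_of_succ_le fun n => (ratDerivedSeries_succ G n).trans_le (ratCommutator_le _)

section TFAStep

variable {G Γ : Type*} [Group G] [Group Γ]

def IsTFAStep (K H : Subgroup Γ) : Prop :=
  K ≤ H ∧ (∀ x ∈ H, ∀ y ∈ H, x * y * x⁻¹ * y⁻¹ ∈ K) ∧
    (∀ x ∈ H, ∀ n : ℤ, n ≠ 0 → x ^ n ∈ K → x ∈ K)

lemma isTFAStep_ratCommutator (H : Subgroup G) : IsTFAStep (ratCommutator H) H :=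
  ⟨ratCommutator_le H,
    fun _ hx _ hy => commutator_le_ratCommutator H (Subgroup.commutator_mem_commutator hx hy),
    fun _ hx _ hn hxn => mem_ratCommutator_of_zpow_mem hx hn hxn⟩

lemma IsTFAStep.map {K H : Subgroup G} (hKH : IsTFAStep K H) (f : G →* Γ) (hf : f.ker ≤ K) :
    IsTFAStep (K.map f) (H.map f) := by
  obtain ⟨hle, hcomm, hroot⟩ := hKH
  refine ⟨Subgroup.map_mono hle, ?_, ?_⟩
  · rintro _ ⟨x, hx, rfl⟩ _ ⟨y, hy, rfl⟩
    simpa only [map_mul, map_inv] using Subgroup.mem_map_of_mem f (hcomm x hx y hy)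
  · rintro _ ⟨x, hx, rfl⟩ n hn hxn
    have hxnK : x ^ n ∈ K := by
      rw [← map_zpow, ← Subgroup.mem_comap, Subgroup.comap_map_eq, sup_eq_left.mpr hf] at hxn
      exact hxn
    exact Subgroup.mem_map_of_mem f (hroot x hx n hn hxnK)

lemma isPTFAOfLength_of_descending (D : ℕ → Subgroup Γ) (m : ℕ) (h0 : D 0 = ⊤) (hm : D m = ⊥)
    (hstep : ∀ i < m, IsTFAStep (D (i + 1)) (D i)) : IsPTFAOfLength Γ m := by
  refine ⟨fun k => D (m - k), by simpa using hm, by simpa using h0, fun k hk => ?_⟩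
  obtain ⟨i, rfl⟩ : ∃ i, m = k + 1 + i := ⟨m - (k + 1), by omega⟩
  have hi : k + 1 + i - k = i + 1 := by omega
  simpa only [IsTFAStep, hi, Nat.add_sub_cancel_left] using hstep i (by omega)

end TFAStep

theorem quotient_ratDerivedSeries_isPTFA (G : Type*) [Group G] (n : ℕ)
    [hN : (ratDerivedSeries G (n + 1)).Normal] :
    IsPTFA (G ⧸ ratDerivedSeries G (n + 1)) := by
  set N := ratDerivedSeries G (n + 1)
  let π := QuotientGroup.mk' N
  refine ⟨n + 1, isPTFAOfLength_of_descending (fun i => (ratDerivedSeries G i).map π) (n + 1)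
    (Subgroup.map_top_of_surjective π (QuotientGroup.mk'_surjective N))
    (QuotientGroup.map_mk'_self N) fun i hi => ?_⟩
  have hker : π.ker ≤ ratCommutator (ratDerivedSeries G i) := by
    rw [QuotientGroup.ker_mk', ← ratDerivedSeries_succ]
    exact ratDerivedSeries_antitone G (by omega)
  simpa only [ratDerivedSeries_succ] using (isTFAStep_ratCommutator _).map π hker
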